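/- arXiv:1402.7005 — 2 statements merged into one kernel-verified Lean document; each statement's English description precedes it below -/
import Mathlib

section
/- Let g: ℝᵈ → ℝ be twice continuously differentiable with ‖D²g(y)‖ ≤ Q for all y (operator norm of the Hessian bounded by Q). Suppose g vanishes at points x₁,…,x_T ∈ ℝᵈ, and let x lie in the convex hull of a subset of these points whose pairwise distances are at most δ. Then |g(x)| ≤ Q δ² / 4. -/
/-! Write `x = ∑ wᵢ • zᵢ` as a convex combination of points `zᵢ ∈ s`. By the second-order Taylor
bound, `0 = g zᵢ` differs from `g x + Dg(x) (zᵢ - x)` by at most `Q/2 ‖zᵢ - x‖²`; averaging with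
the weights `wᵢ` kills the linear terms, so `|g x| ≤ Q/2 ∑ wᵢ ‖zᵢ - x‖²`. By the parallel axis
theorem this weighted variance is half the mean squared distance `∑ wᵢ wⱼ ‖zᵢ - zⱼ‖²`, hence at
most `δ²/2`. -/

open Set

section Taylor

variable {E F : Type*} [NormedAddCommGroup E] [NormedSpace ℝ E]
  [NormedAddCommGroup F] [NormedSpace ℝ F]

theorem norm_fderiv_sub_fderiv_le_of_norm_iteratedFDeriv_two_le {f : E → F} {C : ℝ}
    (hf : ContDiff ℝ 2 f) (hC : ∀ y, ‖iteratedFDeriv ℝ 2 f y‖ ≤ C) (x y : E) :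
    ‖fderiv ℝ f y - fderiv ℝ f x‖ ≤ C * ‖y - x‖ :=
  convex_univ.norm_image_sub_le_of_norm_fderiv_le
    (fun z _ => ((hf.fderiv_right le_rfl).differentiable one_ne_zero) z)
    (fun z _ => by rw [← norm_iteratedFDeriv_one, norm_iteratedFDeriv_fderiv]; exact hC z)
    (mem_univ x) (mem_univ y)

theorem norm_sub_sub_fderiv_le_of_norm_fderiv_sub_le {f : E → F} {C : ℝ} {x : E}
    (hf : Differentiable ℝ f) (hC : ∀ y, ‖fderiv ℝ f y - fderiv ℝ f x‖ ≤ C * ‖y - x‖) (y : E) :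
    ‖f y - f x - fderiv ℝ f x (y - x)‖ ≤ C / 2 * ‖y - x‖ ^ 2 := by
  set v := y - x
  let φ : ℝ → F := fun t => f (x + t • v) - f x - t • fderiv ℝ f x v
  have hφ : ∀ t, HasDerivAt φ (fderiv ℝ f (x + t • v) v - fderiv ℝ f x v) t := by
    intro t
    have hline : HasDerivAt (fun t : ℝ => x + t • v) v t := by
      simpa using ((hasDerivAt_id t).smul_const v).const_add x
    exact (((hf _).hasFDerivAt.comp_hasDerivAt t hline).sub_const (f x)).fun_sub
      (by simpa using (hasDerivAt_id t).smul_const (fderiv ℝ f x v))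
  have hB : ∀ t, HasDerivAt (fun t : ℝ => C / 2 * ‖v‖ ^ 2 * t ^ 2) (C * ‖v‖ ^ 2 * t) t := by
    intro t
    refine ((hasDerivAt_pow 2 t).const_mul (C / 2 * ‖v‖ ^ 2)).congr_deriv ?_
    push_cast
    ring
  have hbound : ∀ t ∈ Ico (0 : ℝ) 1,
      ‖fderiv ℝ f (x + t • v) v - fderiv ℝ f x v‖ ≤ C * ‖v‖ ^ 2 * t := by
    rintro t ⟨ht, -⟩
    calc ‖fderiv ℝ f (x + t • v) v - fderiv ℝ f x v‖
        ≤ ‖fderiv ℝ f (x + t • v) - fderiv ℝ f x‖ * ‖v‖ :=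
          (fderiv ℝ f (x + t • v) - fderiv ℝ f x).le_opNorm v
      _ ≤ C * ‖t • v‖ * ‖v‖ := by
          gcongr
          simpa using hC (x + t • v)
      _ = C * ‖v‖ ^ 2 * t := by
          rw [norm_smul, Real.norm_of_nonneg ht]; ring
  have := image_norm_le_of_norm_deriv_right_le_deriv_boundary
    (fun t _ => (hφ t).continuousAt.continuousWithinAt) (fun t _ => (hφ t).hasDerivWithinAt)
    (by simp [φ]) hB hbound (right_mem_Icc.2 zero_le_one)
  simpa [φ, v] using this

end Taylor

section Centroid

variable {ι E : Type*} [Fintype ι] {w : ι → ℝ} {z : ι → E} {x : E}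

theorem sum_smul_sub_eq_zero_of_sum_smul_eq [AddCommGroup E] [Module ℝ E] (hw : ∑ i, w i = 1)
    (hx : ∑ i, w i • z i = x) : ∑ i, w i • (z i - x) = 0 := by
  simp only [smul_sub, Finset.sum_sub_distrib, ← Finset.sum_smul, hw, one_smul, hx, sub_self]

theorem norm_image_le_of_sum_smul_eq [NormedAddCommGroup E] [NormedSpace ℝ E]
    {F : Type*} [NormedAddCommGroup F] [NormedSpace ℝ F] {f : E → F} (L : E →L[ℝ] F) {K : ℝ}
    (hw₀ : ∀ i, 0 ≤ w i) (hw : ∑ i, w i = 1) (hx : ∑ i, w i • z i = x) (hfz : ∀ i, f (z i) = 0)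
    (hL : ∀ i, ‖f (z i) - f x - L (z i - x)‖ ≤ K * ‖z i - x‖ ^ 2) :
    ‖f x‖ ≤ K * ∑ i, w i * ‖z i - x‖ ^ 2 := by
  have hfx : ∑ i, w i • (f (z i) - f x - L (z i - x)) = -f x := by
    simp only [hfz, zero_sub, smul_sub, smul_neg, Finset.sum_sub_distrib, Finset.sum_neg_distrib,
      ← Finset.sum_smul, hw, one_smul, ← map_smul, ← map_sum, hx, sub_self, map_zero, sub_zero]
  calc ‖f x‖ = ‖∑ i, w i • (f (z i) - f x - L (z i - x))‖ := by rw [hfx, norm_neg]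
    _ ≤ ∑ i, w i * (K * ‖z i - x‖ ^ 2) := by
        refine (norm_sum_le _ _).trans (Finset.sum_le_sum fun i _ => ?_)
        rw [norm_smul, Real.norm_of_nonneg (hw₀ i)]
        exact mul_le_mul_of_nonneg_left (hL i) (hw₀ i)
    _ = K * ∑ i, w i * ‖z i - x‖ ^ 2 := by
        rw [Finset.mul_sum]; exact Finset.sum_congr rfl fun i _ => by ring

variable [NormedAddCommGroup E] [InnerProductSpace ℝ E]

theorem sum_mul_norm_sub_sq_eq_add (hw : ∑ i, w i = 1) (hx : ∑ i, w i • z i = x) (p : E) :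
    ∑ i, w i * ‖z i - p‖ ^ 2 = ∑ i, w i * ‖z i - x‖ ^ 2 + ‖x - p‖ ^ 2 := by
  have hcross : ∑ i, w i * inner ℝ (z i - x) (x - p) = 0 := by
    simp only [← real_inner_smul_left, ← sum_inner, sum_smul_sub_eq_zero_of_sum_smul_eq hw hx,
      inner_zero_left]
  calc ∑ i, w i * ‖z i - p‖ ^ 2
      = ∑ i, (w i * ‖z i - x‖ ^ 2 + 2 * (w i * inner ℝ (z i - x) (x - p)) +
          w i * ‖x - p‖ ^ 2) := by
        refine Finset.sum_congr rfl fun i _ => ?_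
        rw [← sub_add_sub_cancel (z i) x p, norm_add_sq_real]
        ring
    _ = ∑ i, w i * ‖z i - x‖ ^ 2 + ‖x - p‖ ^ 2 := by
        rw [Finset.sum_add_distrib, Finset.sum_add_distrib, ← Finset.mul_sum, hcross,
          ← Finset.sum_mul, hw]
        ring

theorem sum_mul_norm_sub_sq_le_of_sum_smul_eq {δ : ℝ} (hw₀ : ∀ i, 0 ≤ w i)
    (hw : ∑ i, w i = 1) (hx : ∑ i, w i • z i = x) (hz : ∀ i j, ‖z i - z j‖ ≤ δ) :
    ∑ i, w i * ‖z i - x‖ ^ 2 ≤ δ ^ 2 / 2 := by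
  set V := ∑ i, w i * ‖z i - x‖ ^ 2
  have hpairs : ∑ j, w j * ∑ i, w i * ‖z i - z j‖ ^ 2 = 2 * V := by
    calc ∑ j, w j * ∑ i, w i * ‖z i - z j‖ ^ 2 = ∑ j, w j * (V + ‖z j - x‖ ^ 2) :=
          Finset.sum_congr rfl fun j _ => by rw [sum_mul_norm_sub_sq_eq_add hw hx, norm_sub_rev]
      _ = 2 * V := by
          simp only [mul_add, Finset.sum_add_distrib, ← Finset.sum_mul, hw, one_mul]
          ring
  have hpairs_le : ∑ j, w j * ∑ i, w i * ‖z i - z j‖ ^ 2 ≤ δ ^ 2 := by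
    calc ∑ j, w j * ∑ i, w i * ‖z i - z j‖ ^ 2 ≤ ∑ j, w j * ∑ i, w i * δ ^ 2 := by
          gcongr with j _ i
          · exact hw₀ j
          · exact hw₀ i
          · exact hz i j
      _ = δ ^ 2 := by simp only [← Finset.sum_mul, hw, one_mul]
  linarith

end Centroid

/-- If `g : ℝᵈ → ℝ` is `C²` with Hessian (second derivative) uniformly bounded in
operator norm by `Q`, vanishes at sample points `x₁,…,x_T`, and `x` lies in the convex
hull of a subset `s` of the sample points whose pairwise distances are at most `δ`, then
`|g(x)| ≤ Q δ² / 4`. -/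
theorem second_derivative_bound_from_zeros
    {d T : ℕ} (Q δ : ℝ) (g : EuclideanSpace ℝ (Fin d) → ℝ)
    (hg : ContDiff ℝ 2 g)
    (hQ : ∀ y, ‖iteratedFDeriv ℝ 2 g y‖ ≤ Q)
    (xs : Fin T → EuclideanSpace ℝ (Fin d)) (hzero : ∀ i, g (xs i) = 0)
    (s : Set (EuclideanSpace ℝ (Fin d))) (hs : s ⊆ Set.range xs)
    (hdiam : ∀ y ∈ s, ∀ z ∈ s, dist y z ≤ δ)
    (x : EuclideanSpace ℝ (Fin d)) (hx : x ∈ convexHull ℝ s) :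
    |g x| ≤ Q * δ ^ 2 / 4 := by
  obtain ⟨ι, _, w, z, hw₀, hw, hzs, hxz⟩ := mem_convexHull_iff_exists_fintype.1 hx
  have hgz : ∀ i, g (z i) = 0 := fun i => by
    obtain ⟨j, hj⟩ := hs (hzs i)
    rw [← hj, hzero j]
  have htaylor : ∀ y, ‖g y - g x - fderiv ℝ g x (y - x)‖ ≤ Q / 2 * ‖y - x‖ ^ 2 :=
    norm_sub_sub_fderiv_le_of_norm_fderiv_sub_le (hg.differentiable two_ne_zero)
      fun y => norm_fderiv_sub_fderiv_le_of_norm_iteratedFDeriv_two_le hg hQ x y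
  have hQ₀ : 0 ≤ Q := (norm_nonneg _).trans (hQ x)
  calc |g x| ≤ Q / 2 * ∑ i, w i * ‖z i - x‖ ^ 2 :=
        norm_image_le_of_sum_smul_eq (fderiv ℝ g x) hw₀ hw hxz hgz fun i => htaylor (z i)
    _ ≤ Q / 2 * (δ ^ 2 / 2) := by
        gcongr
        refine sum_mul_norm_sub_sq_le_of_sum_smul_eq hw₀ hw hxz fun i j => ?_
        rw [← dist_eq_norm]
        exact hdiam _ (hzs i) _ (hzs j)
    _ = Q * δ ^ 2 / 4 := by ring
end

section
/- Let L be a nonempty finite set, f: L → ℝ an arbitrary function, and suppose there exist functions μ, σ: L → ℝ and a constant β ≥ 0 such that |f(x) − μ(x)| ≤ √β · σ(x) for all x ∈ L. Let x* ∈ L be a point maximizing μ(x) + √β σ(x) over L. Then the regret satisfies max_{y∈L} f(y) − f(x*) ≤ 2√β σ(x*) ≤ 2√β max_{x∈L} σ(x). -/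
open scoped BigOperators

/-- UCB regret bound (Lemma 5.2 of Srinivas et al.): if `|f(x) − μ(x)| ≤ √β σ(x)` on a
nonempty finite set `L` and `x*` maximizes the UCB surrogate `μ + √β σ`, then the regret
satisfies `max f − f(x*) ≤ 2√β σ(x*) ≤ 2√β max σ`. -/
theorem ucb_regret_bound
    {L : Type*} [Fintype L] [Nonempty L]
    (f μ σ : L → ℝ) (β : ℝ) (hβ : 0 ≤ β)
    (henv : ∀ x, |f x - μ x| ≤ Real.sqrt β * σ x)
    (xstar : L)
    (hstar : ∀ x, μ x + Real.sqrt β * σ x ≤ μ xstar + Real.sqrt β * σ xstar) :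
    (⨆ y, f y) - f xstar ≤ 2 * Real.sqrt β * σ xstar ∧
      2 * Real.sqrt β * σ xstar ≤ 2 * Real.sqrt β * ⨆ x, σ x := by
  constructor
  · have hsup : (⨆ y, f y) ≤ μ xstar + Real.sqrt β * σ xstar := by
      apply ciSup_le
      intro y
      have h1 := abs_le.mp (henv y)
      linarith [hstar y]
    have h2 := abs_le.mp (henv xstar)
    linarith
  · have hσ : σ xstar ≤ ⨆ x, σ x := le_ciSup (Finite.bddAbove_range σ) xstar
    have h0 : 0 ≤ 2 * Real.sqrt β := by positivity
    exact mul_le_mul_of_nonneg_left hσ h0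
end
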